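/- arXiv:1710.11203 — 3 statements merged into one kernel-verified Lean document; each statement's English description precedes it below -/
import Mathlib

section
/- Let λ_1, ..., λ_{nk} be distinct real numbers and A(z) the diagonal matrix polynomial with (r,r) entry α_r ∏_{q ∈ [k]_r}(z - λ_q) (α_r ≠ 0). Define f : ℝ^{nk} → ℝ^{nk} mapping the vector of diagonal coefficient entries (x_{s,r})_{0≤s≤k-1, 1≤r≤n} to the list of nk proper values of the matrix polynomial z^k A_k + Σ_{s=0}^{k-1} z^s diag(x_{s,1},...,x_{s,n}). Then the partial derivative ∂λ_q/∂x_{s,r}, evaluated at A(z), equals -λ_q^s / (A^{(1)}(λ_q))_{rr} if q ∈ [k]_r, and 0 otherwise, and the resulting nk×nk Jacobian matrix is nonsingular. -/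
/-!
Each `λ_q`, `q ∈ [k]_r`, is a simple root of the `r`-th diagonal entry of `A`, so by the implicit
function theorem it continues to a strictly differentiable root of the perturbed entry;
differentiating `Σ_s x_{s,r} λ_q^s + α_r λ_q^k = 0` gives
`∂λ_q/∂x_{s,r} = -λ_q^s / (A^{(1)}(λ_q))_{rr}`.
Near `A` the `nk` continued roots stay pairwise distinct, and an entry of degree `k` has no further
roots, so they are exactly the proper values. The Jacobian is block diagonal, its `r`-th block being
the Vandermonde matrix of `(λ_q)_{q ∈ [k]_r}` with rows scaled by nonzero numbers.
-/

open Polynomial Finset Filter Topology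

noncomputable def polyOfCoeffs {R : Type*} [Semiring R] {k : ℕ} (A : R) (y : Fin k → R) : R[X] :=
  C A * X ^ k + ∑ s : Fin k, C (y s) * X ^ (s : ℕ)

/-- The lower coefficients of `A ∏_q (X - v_q)`. -/
def vietaCoeffs {R : Type*} [CommRing R] {k : ℕ} (A : R) (v : Fin k → R) (s : Fin k) : R :=
  (-1) ^ (k - (s : ℕ)) * A * ∑ Q ∈ powersetCard (k - (s : ℕ)) univ, ∏ q ∈ Q, v q

section Algebraic

variable {R : Type*} {k : ℕ}

theorem degree_polyOfCoeffs [Semiring R] {A : R} (hA : A ≠ 0) (y : Fin k → R) :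
    (polyOfCoeffs A y).degree = k := by
  rw [polyOfCoeffs, degree_add_eq_left_of_degree_lt] <;> rw [degree_C_mul_X_pow k hA]
  exact degree_sum_fin_lt y

theorem natDegree_polyOfCoeffs [Semiring R] {A : R} (hA : A ≠ 0) (y : Fin k → R) :
    (polyOfCoeffs A y).natDegree = k :=
  natDegree_eq_of_degree_eq_some (degree_polyOfCoeffs hA y)

theorem polyOfCoeffs_ne_zero [Semiring R] {A : R} (hA : A ≠ 0) (y : Fin k → R) :
    polyOfCoeffs A y ≠ 0 :=
  ne_zero_of_coe_le_degree (degree_polyOfCoeffs hA y).ge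

theorem eval_polyOfCoeffs [CommSemiring R] (A : R) (y : Fin k → R) (z : R) :
    (polyOfCoeffs A y).eval z = A * z ^ k + ∑ s : Fin k, y s * z ^ (s : ℕ) := by
  simp [polyOfCoeffs, eval_finsetSum]

theorem eval_derivative_polyOfCoeffs [CommSemiring R] (A : R) (y : Fin k → R) (z : R) :
    (derivative (polyOfCoeffs A y)).eval z =
      A * (k * z ^ (k - 1)) + ∑ s : Fin k, y s * ((s : ℕ) * z ^ ((s : ℕ) - 1)) := by
  simp [polyOfCoeffs, eval_finsetSum, derivative_X_pow]

theorem polyOfCoeffs_vietaCoeffs [CommRing R] [Nontrivial R] (A : R) (v : Fin k → R) :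
    polyOfCoeffs A (vietaCoeffs A v) = C A * Lagrange.nodal univ v := by
  have hcoeff : ∀ m ≤ k, (Lagrange.nodal univ v).coeff m =
      (-1) ^ (k - m) * ∑ Q ∈ powersetCard (k - m) univ, ∏ q ∈ Q, v q := by
    intro m hm
    have hprod : Lagrange.nodal univ v = ((univ.val.map v).map fun t => X - C t).prod := by
      rw [Multiset.map_map]; rfl
    rw [hprod, Multiset.prod_X_sub_C_coeff _ (by simpa using hm), Finset.esymm_map_val,
      Multiset.card_map, card_val, card_univ, Fintype.card_fin]
  rw [Lagrange.nodal_monic.as_sum, Lagrange.natDegree_nodal, card_univ, Fintype.card_fin,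
    polyOfCoeffs, mul_add, mul_sum, ← Fin.sum_univ_eq_sum_range]
  refine congrArg _ (sum_congr rfl fun s _ => ?_)
  rw [hcoeff s s.is_le', ← mul_assoc, ← C_mul, vietaCoeffs]
  congr 2
  ring

theorem eval_derivative_C_mul_nodal_ne_zero [CommRing R] [IsDomain R] {ι : Type*}
    [DecidableEq ι] {s : Finset ι} {A : R} (hA : A ≠ 0) {v : ι → R} (hv : Set.InjOn v s)
    {i : ι} (hi : i ∈ s) : (derivative (C A * Lagrange.nodal s v)).eval (v i) ≠ 0 := by
  rw [derivative_C_mul, eval_mul, eval_C, Lagrange.eval_nodal_derivative_eval_node_eq hi]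
  refine mul_ne_zero hA (Lagrange.eval_nodal_not_at_node fun j hj hij => ?_)
  exact (mem_erase.1 hj).1 (hv (mem_erase.1 hj).2 hi hij.symm)

theorem Polynomial.isRoot_iff_exists_eq_of_injective [CommRing R] [IsDomain R] {ι : Type*}
    [Fintype ι] {p : R[X]} (hp : p ≠ 0) (hdeg : p.natDegree ≤ Fintype.card ι) {v : ι → R}
    (hv : Function.Injective v) (hroots : ∀ i, p.IsRoot (v i)) (z : R) :
    p.IsRoot z ↔ ∃ i, v i = z := by
  classical
  refine ⟨fun hroot => ?_, fun ⟨i, hi⟩ => hi ▸ hroots i⟩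
  by_contra hne
  have hz : z ∉ univ.image v := by simpa using hne
  have hsub : (insert z (univ.image v)).val ⊆ p.roots := by
    intro w hw
    rw [mem_roots hp]
    rcases mem_insert.1 hw with rfl | hw
    · exact hroot
    · obtain ⟨i, -, rfl⟩ := mem_image.1 hw
      exact hroots i
  have := card_le_degree_of_subset_roots hsub
  rw [card_insert_of_notMem hz, card_image_of_injective _ hv, card_univ] at this
  omega

theorem eval_det_diagonal_eq_zero_iff [CommRing R] [IsDomain R] {m ι : Type*} [Fintype m]
    [DecidableEq m] [Fintype ι] {P : m → R[X]} (hP : ∀ r, P r ≠ 0)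
    (hdeg : ∀ r, (P r).natDegree ≤ Fintype.card ι) {w : m × ι → R} (hw : Function.Injective w)
    (hroots : ∀ p, (P p.1).IsRoot (w p)) (z : R) :
    (Matrix.diagonal P).det.eval z = 0 ↔ ∃ p, w p = z := by
  simp only [Matrix.det_diagonal, eval_prod, prod_eq_zero_iff, mem_univ, true_and, Prod.exists]
  exact exists_congr fun r => (P r).isRoot_iff_exists_eq_of_injective (hP r) (hdeg r)
    (hw.comp (Prod.mk_right_injective r)) (fun q => hroots (r, q)) z

end Algebraic

section Analytic

variable {𝕜 : Type*} [NontriviallyNormedField 𝕜] {k : ℕ}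

theorem HasStrictFDerivAt.exists_implicitFunction_scalar [CompleteSpace 𝕜] {E : Type*}
    [NormedAddCommGroup E] [NormedSpace 𝕜 E] [CompleteSpace E] {Φ : E × 𝕜 → 𝕜}
    {L : E →L[𝕜] 𝕜} {c : 𝕜} {u : E × 𝕜}
    (hΦ : HasStrictFDerivAt Φ (L ∘L .fst 𝕜 E 𝕜 + c • .snd 𝕜 E 𝕜) u) (hc : c ≠ 0) :
    ∃ g : E → 𝕜, g u.1 = u.2 ∧ HasStrictFDerivAt g (-c⁻¹ • L) u.1 ∧
      ∀ᶠ x in 𝓝 u.1, Φ (x, g x) = Φ u := by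
  have hinl : (L ∘L .fst 𝕜 E 𝕜 + c • .snd 𝕜 E 𝕜) ∘L .inl 𝕜 E 𝕜 = L := by ext; simp
  have hinr : (L ∘L .fst 𝕜 E 𝕜 + c • .snd 𝕜 E 𝕜) ∘L .inr 𝕜 E 𝕜 = c • .id 𝕜 𝕜 := by ext; simp
  have hcomp : (c • .id 𝕜 𝕜 : 𝕜 →L[𝕜] 𝕜) ∘L (c⁻¹ • .id 𝕜 𝕜) = .id 𝕜 𝕜 := by ext; simp [hc]
  have hcomp' : (c⁻¹ • .id 𝕜 𝕜 : 𝕜 →L[𝕜] 𝕜) ∘L (c • .id 𝕜 𝕜) = .id 𝕜 𝕜 := by ext; simp [hc]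
  have hinv : ((L ∘L .fst 𝕜 E 𝕜 + c • .snd 𝕜 E 𝕜) ∘L .inr 𝕜 E 𝕜).IsInvertible := by
    rw [hinr]; exact .of_inverse hcomp hcomp'
  refine ⟨hΦ.implicitFunctionOfProdDomain hinv, ?_, ?_,
    hΦ.eventually_apply_implicitFunctionOfProdDomain hinv⟩
  · exact (hΦ.eventually_apply_eq_iff_implicitFunctionOfProdDomain hinv).self_of_nhds.1 rfl
  · refine (hΦ.hasStrictFDerivAt_implicitFunctionOfProdDomain hinv).congr_fderiv ?_
    rw [hinl, hinr, ContinuousLinearMap.inverse_eq hcomp hcomp']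
    ext; simp

theorem hasStrictFDerivAt_eval_polyOfCoeffs (A : 𝕜) (y : Fin k → 𝕜) (z : 𝕜) :
    HasStrictFDerivAt (fun u : (Fin k → 𝕜) × 𝕜 => (polyOfCoeffs A u.1).eval u.2)
      ((∑ s : Fin k, z ^ (s : ℕ) • ContinuousLinearMap.proj s) ∘L .fst 𝕜 _ 𝕜 +
        (derivative (polyOfCoeffs A y)).eval z • .snd 𝕜 _ 𝕜) (y, z) := by
  have hpow (m : ℕ) : HasStrictFDerivAt (fun u : (Fin k → 𝕜) × 𝕜 => u.2 ^ m)
      ((m * z ^ (m - 1)) • .snd 𝕜 _ 𝕜) (y, z) :=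
    (hasStrictDerivAt_pow m z).comp_hasStrictFDerivAt (y, z) hasStrictFDerivAt_snd
  have hterm (s : Fin k) := ((ContinuousLinearMap.proj s ∘L
    .fst 𝕜 (Fin k → 𝕜) 𝕜).hasStrictFDerivAt (x := (y, z))).mul (hpow s)
  have hsum := ((hpow k).const_mul A).add (HasStrictFDerivAt.sum (u := univ) fun s _ => hterm s)
  refine (hsum.congr_fderiv ?_).congr_of_eventuallyEq (.of_forall fun u => ?_)
  · refine ContinuousLinearMap.ext fun u => ?_
    simp only [ContinuousLinearMap.comp_apply, ContinuousLinearMap.coe_fst',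
      ContinuousLinearMap.proj_apply, sum_add_distrib, add_apply, smul_apply,
      ContinuousLinearMap.coe_snd', smul_eq_mul, _root_.sum_apply, eval_derivative_polyOfCoeffs,
      add_mul, sum_mul, mul_assoc]
    ring
  · simp [eval_polyOfCoeffs]

theorem exists_hasStrictFDerivAt_isRoot_polyOfCoeffs [CompleteSpace 𝕜] {A : 𝕜} {y : Fin k → 𝕜}
    {z : 𝕜} (hz : (polyOfCoeffs A y).IsRoot z)
    (hsimple : (derivative (polyOfCoeffs A y)).eval z ≠ 0) :
    ∃ g : (Fin k → 𝕜) → 𝕜, g y = z ∧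
      HasStrictFDerivAt g (-((derivative (polyOfCoeffs A y)).eval z)⁻¹ •
        ∑ s : Fin k, z ^ (s : ℕ) • (ContinuousLinearMap.proj s : (Fin k → 𝕜) →L[𝕜] 𝕜)) y ∧
      ∀ᶠ y' in 𝓝 y, (polyOfCoeffs A y').IsRoot (g y') := by
  obtain ⟨g, hgy, hg, hroot⟩ :=
    (hasStrictFDerivAt_eval_polyOfCoeffs A y z).exists_implicitFunction_scalar hsimple
  exact ⟨g, hgy, hg, hroot.mono fun y' hy' => hy'.trans hz⟩

theorem exists_hasStrictFDerivAt_isRoot_polyOfCoeffs_vietaCoeffs [CompleteSpace 𝕜] {A : 𝕜}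
    (hA : A ≠ 0) {v : Fin k → 𝕜} (hv : Function.Injective v) (q : Fin k) :
    ∃ g : (Fin k → 𝕜) → 𝕜, g (vietaCoeffs A v) = v q ∧
      HasStrictFDerivAt g (∑ s : Fin k,
        (-v q ^ (s : ℕ) / (derivative (C A * Lagrange.nodal univ v)).eval (v q)) •
          (ContinuousLinearMap.proj s : (Fin k → 𝕜) →L[𝕜] 𝕜)) (vietaCoeffs A v) ∧
      ∀ᶠ y in 𝓝 (vietaCoeffs A v), (polyOfCoeffs A y).IsRoot (g y) := by
  have hroot : (polyOfCoeffs A (vietaCoeffs A v)).IsRoot (v q) := by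
    rw [polyOfCoeffs_vietaCoeffs, IsRoot, eval_mul, Lagrange.eval_nodal_at_node (mem_univ q),
      mul_zero]
  have hsimple := eval_derivative_C_mul_nodal_ne_zero hA hv.injOn (mem_univ q)
  rw [← polyOfCoeffs_vietaCoeffs] at hsimple
  obtain ⟨g, hgy, hg, hgroot⟩ := exists_hasStrictFDerivAt_isRoot_polyOfCoeffs hroot hsimple
  refine ⟨g, hgy, hg.congr_fderiv ?_, hgroot⟩
  rw [polyOfCoeffs_vietaCoeffs, smul_sum]
  refine sum_congr rfl fun s _ => ?_
  rw [smul_smul]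
  congr 1
  ring

end Analytic

theorem ContinuousAt.eventually_injective {X Y ι : Type*} [TopologicalSpace X]
    [TopologicalSpace Y] [T2Space Y] [Finite ι] {f : X → ι → Y} {a : X} (hf : ContinuousAt f a)
    (hinj : Function.Injective (f a)) : ∀ᶠ x in 𝓝 a, Function.Injective (f x) := by
  have hne (i j : ι) : ∀ᶠ x in 𝓝 a, i ≠ j → f x i ≠ f x j := by
    by_cases hij : i = j
    · exact .of_forall fun _ h => absurd hij h
    · exact (((continuous_apply i).continuousAt.comp hf).prodMk_nhds
        ((continuous_apply j).continuousAt.comp hf)).eventually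
        ((isOpen_ne_fun continuous_fst continuous_snd).mem_nhds (hinj.ne hij)) |>.mono
        fun _ h _ => h
  filter_upwards [eventually_all.2 fun i => eventually_all.2 (hne i)] with x hx i j hfij
  by_contra hij
  exact hx i j hij hfij

namespace Matrix

variable {m n R : Type*} [DecidableEq m]

/-- `Matrix.blockDiagonal` with the block index as the first coordinate instead of the second. -/
def blockDiagonalFst [Zero R] (M : m → Matrix n n R) : Matrix (m × n) (m × n) R :=
  of fun p q => if q.1 = p.1 then M p.1 p.2 q.2 else 0

theorem blockDiagonalFst_eq_submatrix [DecidableEq n] [Zero R] (M : m → Matrix n n R) :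
    blockDiagonalFst M =
      (blockDiagonal M).submatrix (Equiv.prodComm m n) (Equiv.prodComm m n) := by
  ext p q
  simp [blockDiagonalFst, blockDiagonal_apply, eq_comm]

theorem mulVec_blockDiagonalFst_apply [Fintype m] [Fintype n] [NonUnitalNonAssocSemiring R]
    (M : m → Matrix n n R) (v : m × n → R) (p : m × n) :
    (blockDiagonalFst M *ᵥ v) p = ∑ s, M p.1 p.2 s * v (p.1, s) := by
  simp [blockDiagonalFst, mulVec, dotProduct, Fintype.sum_prod_type, ite_mul]

theorem isUnit_blockDiagonalFst [Fintype m] [Fintype n] [DecidableEq n] [CommRing R]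
    {M : m → Matrix n n R} (hM : ∀ r, IsUnit (M r)) :
    IsUnit (blockDiagonalFst M) := by
  rw [blockDiagonalFst_eq_submatrix, isUnit_iff_isUnit_det, det_submatrix_equiv_self,
    det_blockDiagonal]
  exact IsUnit.prod_univ_iff.2 fun r => (isUnit_iff_isUnit_det _).1 (hM r)

theorem isUnit_neg_pow_div {K : Type*} [Field K] {k : ℕ} {v d : Fin k → K}
    (hv : Function.Injective v) (hd : ∀ q, d q ≠ 0) :
    IsUnit (of fun q s : Fin k => -v q ^ (s : ℕ) / d q) := by
  have hfactor : (of fun q s : Fin k => -v q ^ (s : ℕ) / d q) =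
      diagonal (fun q => -(d q)⁻¹) * vandermonde v := by
    ext q s
    simp [diagonal_mul, vandermonde_apply, div_eq_mul_inv, mul_comm]
  rw [hfactor, isUnit_iff_isUnit_det, det_mul, det_diagonal, isUnit_iff_ne_zero]
  exact mul_ne_zero (prod_ne_zero_iff.2 fun q _ => by simpa using hd q)
    (det_vandermonde_ne_zero_iff.2 hv)

end Matrix

theorem stmt_8_general (n k : ℕ) (α : Fin n → ℝ) (hα : ∀ r, α r ≠ 0)
    (lam : Fin n → Fin k → ℝ)
    (hdist : Function.Injective (fun p : Fin n × Fin k => lam p.1 p.2)) :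
    -- the coefficients of the diagonal entries of `A(z)` (Eq. (wow))
    let a : (Fin n × Fin k) → ℝ := fun rs =>
      (-1 : ℝ) ^ (k - (rs.2 : ℕ)) * α rs.1 *
        ∑ Q ∈ Finset.powersetCard (k - (rs.2 : ℕ)) (Finset.univ : Finset (Fin k)),
          ∏ q ∈ Q, lam rs.1 q
    -- the diagonal entries of the matrix polynomial, as functions of the
    -- diagonal coefficient variables `x`
    let P : ((Fin n × Fin k) → ℝ) → Fin n → Polynomial ℝ := fun x r =>
      Polynomial.C (α r) * Polynomial.X ^ k +
        ∑ s : Fin k, Polynomial.C (x (r, s)) * Polynomial.X ^ (s : ℕ)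
    -- the claimed Jacobian matrix
    let Jmat : Matrix (Fin n × Fin k) (Fin n × Fin k) ℝ := fun rq rs =>
      if rs.1 = rq.1 then
        - (lam rq.1 rq.2) ^ (rs.2 : ℕ) /
          ((Polynomial.derivative (Polynomial.C (α rq.1) *
              ∏ q : Fin k, (Polynomial.X - Polynomial.C (lam rq.1 q)))).eval
            (lam rq.1 rq.2))
      else 0
    ∃ (U : Set ((Fin n × Fin k) → ℝ))
      (f : ((Fin n × Fin k) → ℝ) → (Fin n × Fin k) → ℝ),
      U ∈ nhds a ∧
      -- on `U`, `f x` enumerates (without repetition) the proper values of the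
      -- diagonal matrix polynomial determined by `x`
      (∀ x ∈ U, Function.Injective (f x) ∧
        ∀ z : ℝ, ((Matrix.diagonal (P x)).det.eval z = 0 ↔ ∃ i, f x i = z)) ∧
      (f a = fun rq => lam rq.1 rq.2) ∧
      HasFDerivAt f (LinearMap.toContinuousLinearMap (Matrix.toLin' Jmat)) a ∧
      IsUnit Jmat := by
  intro a P Jmat
  have hlam (r : Fin n) : Function.Injective (lam r) := hdist.comp (Prod.mk_right_injective r)
  choose g hg_at hg_deriv hg_root using fun p : Fin n × Fin k =>
    exists_hasStrictFDerivAt_isRoot_polyOfCoeffs_vietaCoeffs (hα p.1) (hlam p.1) p.2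
  let row (r : Fin n) : ((Fin n × Fin k) → ℝ) →L[ℝ] (Fin k → ℝ) :=
    ContinuousLinearMap.pi fun s => ContinuousLinearMap.proj (r, s)
  let f x (p : Fin n × Fin k) := g p (row p.1 x)
  have hf_at : f a = fun p => lam p.1 p.2 := funext hg_at
  let M (r : Fin n) := Matrix.of fun q s : Fin k => -lam r q ^ (s : ℕ) /
    (derivative (C (α r) * Lagrange.nodal univ (lam r))).eval (lam r q)
  have hJ : Jmat = Matrix.blockDiagonalFst M := rfl
  have hf_deriv : HasFDerivAt f (LinearMap.toContinuousLinearMap (Matrix.toLin' Jmat)) a := by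
    refine hasFDerivAt_pi'' fun p => ?_
    refine ((hg_deriv p).comp a (row p.1).hasStrictFDerivAt).hasFDerivAt.congr_fderiv
      (ContinuousLinearMap.ext fun v => ?_)
    simp [hJ, Matrix.mulVec_blockDiagonalFst_apply, M, row]
  have hU : {x | Function.Injective (f x) ∧ ∀ p, (P x p.1).IsRoot (f x p)} ∈ 𝓝 a :=
    (hf_deriv.continuousAt.eventually_injective (hf_at ▸ hdist)).and
      (eventually_all.2 fun p => ((row p.1).continuous.tendsto a).eventually (hg_root p))
  have hJ_unit : IsUnit Jmat := hJ ▸ Matrix.isUnit_blockDiagonalFst fun r =>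
    Matrix.isUnit_neg_pow_div (hlam r) fun q =>
      eval_derivative_C_mul_nodal_ne_zero (hα r) (hlam r).injOn (mem_univ q)
  refine ⟨_, f, hU, fun x hx => ⟨hx.1, eval_det_diagonal_eq_zero_iff
    (fun r => polyOfCoeffs_ne_zero (hα r) _) (fun r => ?_) hx.1 hx.2⟩, hf_at, hf_deriv, hJ_unit⟩
  rw [natDegree_polyOfCoeffs (hα r), Fintype.card_fin]

/-- At the special diagonal matrix polynomial `A(z)`, the map `f` sending the
diagonal coefficient entries `x_{s,r}` (the leading coefficient `diag α` being
fixed) to the `nk` proper values is differentiable, its Jacobian has entries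
`-λ_{r,q}^s / (A⁽¹⁾(λ_{r,q}))_{rr}` for `q ∈ [k]_r` and `0` otherwise, and this
Jacobian matrix is nonsingular. -/
theorem stmt_8 (n k : ℕ) (hk : 0 < k) (α : Fin n → ℝ) (hα : ∀ r, α r ≠ 0)
    (lam : Fin n → Fin k → ℝ)
    (hdist : Function.Injective (fun p : Fin n × Fin k => lam p.1 p.2)) :
    -- the coefficients of the diagonal entries of `A(z)` (Eq. (wow))
    let a : (Fin n × Fin k) → ℝ := fun rs =>
      (-1 : ℝ) ^ (k - (rs.2 : ℕ)) * α rs.1 *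
        ∑ Q ∈ Finset.powersetCard (k - (rs.2 : ℕ)) (Finset.univ : Finset (Fin k)),
          ∏ q ∈ Q, lam rs.1 q
    -- the diagonal entries of the matrix polynomial, as functions of the
    -- diagonal coefficient variables `x`
    let P : ((Fin n × Fin k) → ℝ) → Fin n → Polynomial ℝ := fun x r =>
      Polynomial.C (α r) * Polynomial.X ^ k +
        ∑ s : Fin k, Polynomial.C (x (r, s)) * Polynomial.X ^ (s : ℕ)
    -- the claimed Jacobian matrix
    let Jmat : Matrix (Fin n × Fin k) (Fin n × Fin k) ℝ := fun rq rs =>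
      if rs.1 = rq.1 then
        - (lam rq.1 rq.2) ^ (rs.2 : ℕ) /
          ((Polynomial.derivative (Polynomial.C (α rq.1) *
              ∏ q : Fin k, (Polynomial.X - Polynomial.C (lam rq.1 q)))).eval
            (lam rq.1 rq.2))
      else 0
    ∃ (U : Set ((Fin n × Fin k) → ℝ))
      (f : ((Fin n × Fin k) → ℝ) → (Fin n × Fin k) → ℝ),
      U ∈ nhds a ∧
      -- on `U`, `f x` enumerates (without repetition) the proper values of the
      -- diagonal matrix polynomial determined by `x`
      (∀ x ∈ U, Function.Injective (f x) ∧
        ∀ z : ℝ, ((Matrix.diagonal (P x)).det.eval z = 0 ↔ ∃ i, f x i = z)) ∧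
      (f a = fun rq => lam rq.1 rq.2) ∧
      HasFDerivAt f (LinearMap.toContinuousLinearMap (Matrix.toLin' Jmat)) a ∧
      IsUnit Jmat :=
  stmt_8_general n k α hα lam hdist
end

section
/- Let λ_1, ..., λ_{nk} be nk distinct real numbers, α_1, ..., α_n positive real numbers, and G_0, ..., G_{k-1} simple graphs on n vertices. Then there exist real symmetric n×n matrices A_0, ..., A_{k-1} such that the matrix polynomial A(z) = diag(α_1,...,α_n) z^k + A_{k-1} z^{k-1} + ... + A_1 z + A_0 has exactly {λ_1, ..., λ_{nk}} as the set of zeros of det A(z), and for each s, the graph of A_s is G_s (i.e., for i ≠ j, (A_s)_{ij} ≠ 0 if and only if {i,j} is an edge of G_s). -/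
open Polynomial Finset Topology

/-!
At coupling `t = 0` take `A(z)` diagonal with `i`-th entry `α_i ∏_m (z - λ_{i,m})`: its determinant
vanishes exactly at the `λ`'s. Let the lower diagonal coefficients vary freely and put `t` times the
adjacency matrix of `G_s` off the diagonal of `A_s`. The map
`(t, diagonal coefficients) ↦ (t, (det A(λ_q))_q)` has injective derivative at the diagonal point:
in a diagonal direction `(q_i)_i`, the derivative of `det A(λ_{i,m})` is `q_i(λ_{i,m})` times a
nonzero product, and `q_i`, of degree `< k`, cannot vanish at the `k` distinct points `λ_{i,m}`.
By the inverse function theorem some point with `t ≠ 0` keeps every `λ_q` a zero of `det A`; since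
`det A` has degree `nk` and leading coefficient `∏ α_i`, there are no other zeros.
-/

namespace MatrixPolynomial

theorem eval_eq_zero_iff_of_natDegree_le {R κ : Type*} [CommRing R] [IsDomain R] [Fintype κ]
    {p : R[X]} (hp : p ≠ 0) {μ : κ → R} (hμ : Function.Injective μ)
    (hdeg : p.natDegree ≤ Fintype.card κ) (hroot : ∀ q, p.eval (μ q) = 0) (z : R) :
    p.eval z = 0 ↔ ∃ q, μ q = z := by
  refine ⟨fun hz => ?_, fun ⟨q, hq⟩ => hq ▸ hroot q⟩
  by_contra! hne
  have hinj : Function.Injective fun o : Option κ => o.elim z μ := by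
    rintro (_ | a) (_ | b) h
    exacts [rfl, (hne b h.symm).elim, (hne a h).elim, congrArg some (hμ h)]
  refine hp (eq_zero_of_natDegree_lt_card_of_eval_eq_zero p hinj ?_ ?_)
  · rintro (_ | q)
    exacts [hz, hroot q]
  · simpa using Nat.lt_succ_of_le hdeg

section DominantDiagonal

variable {R ι : Type*} [CommRing R] [Fintype ι] [DecidableEq ι] {k : ℕ}
  {M : Matrix ι ι R[X]}

theorem natDegree_prod_perm_lt (hdiag : ∀ i, (M i i).natDegree ≤ k)
    (hoff : ∀ i j, i ≠ j → (M i j).natDegree < k) {σ : Equiv.Perm ι} (hσ : σ ≠ 1) :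
    (∏ i, M (σ i) i).natDegree < Fintype.card ι * k := by
  obtain ⟨i₀, hi₀⟩ : ∃ i, σ i ≠ i := by simpa [Equiv.ext_iff] using hσ
  have hle : ∀ i, (M (σ i) i).natDegree ≤ k := fun i => by
    by_cases h : σ i = i
    · rw [h]; exact hdiag i
    · exact (hoff _ _ h).le
  calc (∏ i, M (σ i) i).natDegree ≤ ∑ i, (M (σ i) i).natDegree := natDegree_prod_le _ _
    _ < ∑ _i : ι, k := sum_lt_sum (fun i _ => hle i) ⟨i₀, mem_univ _, hoff _ _ hi₀⟩
    _ = Fintype.card ι * k := by simp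

theorem coeff_det_eq_coeff_prod_diag (hdiag : ∀ i, (M i i).natDegree ≤ k)
    (hoff : ∀ i j, i ≠ j → (M i j).natDegree < k) {m : ℕ} (hm : Fintype.card ι * k ≤ m) :
    M.det.coeff m = (∏ i, M i i).coeff m := by
  rw [Matrix.det_apply, ← add_sum_erase _ _ (mem_univ 1), coeff_add, finsetSum_coeff]
  have hrest : ∀ σ ∈ univ.erase (1 : Equiv.Perm ι),
      (Equiv.Perm.sign σ • ∏ i, M (σ i) i).coeff m = 0 := fun σ hσ => by
    have hlt := (natDegree_prod_perm_lt hdiag hoff (ne_of_mem_erase hσ)).trans_le hm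
    rw [Units.smul_def, coeff_smul, coeff_eq_zero_of_natDegree_lt hlt, smul_zero]
  rw [sum_eq_zero hrest, add_zero, Equiv.Perm.sign_one, one_smul]
  rfl

theorem natDegree_det_le (hdiag : ∀ i, (M i i).natDegree ≤ k)
    (hoff : ∀ i j, i ≠ j → (M i j).natDegree < k) : M.det.natDegree ≤ Fintype.card ι * k := by
  refine natDegree_le_iff_coeff_eq_zero.mpr fun m hm => ?_
  rw [coeff_det_eq_coeff_prod_diag hdiag hoff (by exact_mod_cast hm.le)]
  refine coeff_eq_zero_of_natDegree_lt (lt_of_le_of_lt ?_ (by exact_mod_cast hm))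
  exact (natDegree_prod_le _ _).trans ((sum_le_sum fun i _ => hdiag i).trans (by simp))

theorem coeff_det_card_mul (hdiag : ∀ i, (M i i).natDegree ≤ k)
    (hoff : ∀ i j, i ≠ j → (M i j).natDegree < k) :
    M.det.coeff (Fintype.card ι * k) = ∏ i, (M i i).coeff k := by
  rw [coeff_det_eq_coeff_prod_diag hdiag hoff le_rfl, ← card_univ]
  exact coeff_prod_of_natDegree_le (s := univ) _ _ fun i _ => hdiag i

end DominantDiagonal

section MatrixPoly

variable {R ι : Type*} [CommRing R] [DecidableEq ι] {k : ℕ}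

noncomputable def ofCoeffs (c : Fin k → R) : R[X] := ∑ s : Fin k, C (c s) * X ^ (s : ℕ)

theorem coeff_ofCoeffs_of_le (c : Fin k → R) {m : ℕ} (hm : k ≤ m) : (ofCoeffs c).coeff m = 0 :=
  coeff_eq_zero_of_degree_lt ((degree_sum_fin_lt c).trans_le (by exact_mod_cast hm))

theorem natDegree_ofCoeffs_lt (hk : 0 < k) (c : Fin k → R) : (ofCoeffs c).natDegree < k := by
  by_cases h : ofCoeffs c = 0
  · simpa [h]
  · exact (natDegree_lt_iff_degree_lt h).2 (degree_sum_fin_lt c)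

theorem coeff_ofCoeffs (c : Fin k → R) (s : Fin k) : (ofCoeffs c).coeff s = c s := by
  simp [ofCoeffs, finsetSum_coeff, Fin.val_inj]

theorem ofCoeffs_add_smul (a b : Fin k → R) (t : R) :
    ofCoeffs (a + t • b) = ofCoeffs a + C t * ofCoeffs b := by
  simp only [ofCoeffs, mul_sum, ← sum_add_distrib, Pi.add_apply, Pi.smul_apply, smul_eq_mul,
    C_add, C_mul]
  exact sum_congr rfl fun s _ => by ring

theorem eq_C_mul_X_pow_add_ofCoeffs {p : R[X]} (hp : p.natDegree ≤ k) :
    p = C (p.coeff k) * X ^ k + ofCoeffs fun s : Fin k => p.coeff s := by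
  conv_lhs => rw [p.as_sum_range' (k + 1) (Nat.lt_succ_of_le hp)]
  rw [sum_range_succ, add_comm, ofCoeffs,
    Fin.sum_univ_eq_sum_range (fun s => C (p.coeff s) * X ^ s)]
  simp only [C_mul_X_pow_eq_monomial]

noncomputable def matrixPoly (α : ι → R) (A : Fin k → Matrix ι ι R) : Matrix ι ι R[X] :=
  Matrix.of fun i j => (if i = j then C (α i) * X ^ k else 0) + ofCoeffs fun s => A s i j

variable (α : ι → R) (A : Fin k → Matrix ι ι R)

theorem matrixPoly_apply_self (i : ι) :
    matrixPoly α A i i = C (α i) * X ^ k + ofCoeffs fun s => A s i i := by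
  simp [matrixPoly]

theorem matrixPoly_apply_of_ne {i j : ι} (hij : i ≠ j) :
    matrixPoly α A i j = ofCoeffs fun s => A s i j := by
  simp [matrixPoly, hij]

theorem natDegree_matrixPoly_apply_self_le (i : ι) : (matrixPoly α A i i).natDegree ≤ k := by
  rw [matrixPoly_apply_self]
  exact natDegree_add_le_of_degree_le (natDegree_C_mul_X_pow_le _ _)
    (natDegree_le_of_degree_le (degree_sum_fin_lt _).le)

theorem coeff_matrixPoly_apply_self (i : ι) : (matrixPoly α A i i).coeff k = α i := by
  rw [matrixPoly_apply_self, coeff_add, coeff_C_mul_X_pow, if_pos rfl,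
    coeff_ofCoeffs_of_le _ le_rfl, add_zero]

theorem natDegree_matrixPoly_apply_lt (hk : 0 < k) {i j : ι} (hij : i ≠ j) :
    (matrixPoly α A i j).natDegree < k := by
  rw [matrixPoly_apply_of_ne α A hij]
  exact natDegree_ofCoeffs_lt hk _

theorem natDegree_det_matrixPoly_le [Fintype ι] (hk : 0 < k) :
    (matrixPoly α A).det.natDegree ≤ Fintype.card ι * k :=
  natDegree_det_le (natDegree_matrixPoly_apply_self_le α A)
    fun _ _ => natDegree_matrixPoly_apply_lt α A hk

theorem coeff_det_matrixPoly [Fintype ι] (hk : 0 < k) :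
    (matrixPoly α A).det.coeff (Fintype.card ι * k) = ∏ i, α i := by
  rw [coeff_det_card_mul (natDegree_matrixPoly_apply_self_le α A)
    fun _ _ => natDegree_matrixPoly_apply_lt α A hk]
  exact prod_congr rfl fun i _ => coeff_matrixPoly_apply_self α A i

theorem eval_det_matrixPoly_eq_zero_iff [Fintype ι] [IsDomain R] (hk : 0 < k) (hα : ∀ i, α i ≠ 0)
    {κ : Type*} [Fintype κ] {μ : κ → R} (hμ : Function.Injective μ)
    (hcard : Fintype.card κ = Fintype.card ι * k)
    (hroot : ∀ q, (matrixPoly α A).det.eval (μ q) = 0) (z : R) :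
    (matrixPoly α A).det.eval z = 0 ↔ ∃ q, μ q = z := by
  have hne : (matrixPoly α A).det ≠ 0 := fun h => by
    simpa [h, eq_comm, prod_eq_zero_iff, hα] using coeff_det_matrixPoly α A hk
  exact eval_eq_zero_iff_of_natDegree_le hne hμ (hcard ▸ natDegree_det_matrixPoly_le α A hk) hroot z

end MatrixPoly

theorem hasDerivAt_prod_add_mul {𝕜 ι : Type*} [NontriviallyNormedField 𝕜] [Fintype ι]
    [DecidableEq ι] (a b : ι → 𝕜) {i : ι} (hi : a i = 0) :
    HasDerivAt (fun t : 𝕜 => ∏ j, (a j + t * b j)) ((∏ j ∈ univ.erase i, a j) * b i) 0 := by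
  refine (HasDerivAt.fun_finsetProd (u := univ) (f := fun j t => a j + t * b j) (f' := b)
    fun j _ => ?_).congr_deriv ?_
  · simpa using ((hasDerivAt_id (0 : 𝕜)).mul_const (b j)).const_add (a j)
  rw [sum_eq_single i (fun j _ hji => ?_) (fun h => (h (mem_univ i)).elim)]
  · simp
  · simp [prod_eq_zero (mem_erase.2 ⟨Ne.symm hji, mem_univ i⟩) hi]

theorem contDiff_det {𝕜 ι E : Type*} [NontriviallyNormedField 𝕜] [Fintype ι] [DecidableEq ι]
    [NormedAddCommGroup E] [NormedSpace 𝕜 E] {n : WithTop ℕ∞} {f : E → Matrix ι ι 𝕜}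
    (hf : ∀ i j, ContDiff 𝕜 n fun x => f x i j) : ContDiff 𝕜 n fun x => (f x).det := by
  simp only [Matrix.det_apply']
  exact ContDiff.sum fun σ _ => contDiff_const.mul (contDiff_prod fun i _ => hf _ _)

section DiagPoly

variable {ι : Type*} {k : ℕ} (α : ι → ℝ) (μ : ι × Fin k → ℝ)

noncomputable def diagPoly (i : ι) : ℝ[X] := C (α i) * ∏ m : Fin k, (X - C (μ (i, m)))

theorem diagPoly_eq (i : ι) :
    diagPoly α μ i = C (α i) * X ^ k + ofCoeffs (k := k) fun s => (diagPoly α μ i).coeff s := by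
  have hprod : (∏ m : Fin k, (X - C (μ (i, m)))).natDegree ≤ k :=
    (natDegree_prod_le _ _).trans (by simp)
  have hcoeff : (diagPoly α μ i).coeff k = α i := by
    have h := coeff_prod_of_natDegree_le (s := univ) (fun m : Fin k => X - C (μ (i, m))) 1
      fun m _ => (natDegree_X_sub_C _).le
    simp_all [diagPoly]
  conv_lhs => rw [eq_C_mul_X_pow_add_ofCoeffs (p := diagPoly α μ i)
    ((natDegree_C_mul_le _ _).trans hprod), hcoeff]

theorem eval_diagPoly_self (i : ι) (m : Fin k) : (diagPoly α μ i).eval (μ (i, m)) = 0 := by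
  simp [diagPoly, eval_prod, prod_eq_zero (mem_univ m)]

theorem eval_diagPoly_ne_zero (hμ : Function.Injective μ) (hα : ∀ i, α i ≠ 0) {i j : ι}
    (hij : j ≠ i) (m : Fin k) : (diagPoly α μ j).eval (μ (i, m)) ≠ 0 := by
  simp only [diagPoly, eval_mul, eval_C, eval_prod, eval_sub, eval_X]
  refine mul_ne_zero (hα j) (prod_ne_zero_iff.2 fun m' _ => sub_ne_zero.2 fun h => hij ?_)
  exact (congrArg Prod.fst (hμ h)).symm

noncomputable def basePoint : Option (ι × Fin k) → ℝ
  | none => 0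
  | some (i, s) => (diagPoly α μ i).coeff s

end DiagPoly

section Perturbation

variable {ι : Type*} [DecidableEq ι] {k : ℕ}
  (G : Fin k → SimpleGraph ι) [∀ s, DecidableRel (G s).Adj] (α : ι → ℝ) (μ : ι × Fin k → ℝ)

/-- `x none` is the coupling parameter and `x (some (i, s))` the coefficient of `z ^ s` in the
`i`-th diagonal entry. -/
noncomputable def coeffMatrices (x : Option (ι × Fin k) → ℝ) (s : Fin k) : Matrix ι ι ℝ :=
  Matrix.diagonal (fun i => x (some (i, s))) + x none • (G s).adjMatrix ℝ

theorem isSymm_coeffMatrices (x : Option (ι × Fin k) → ℝ) (s : Fin k) :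
    (coeffMatrices G x s).IsSymm :=
  (Matrix.isSymm_diagonal _).add ((G s).isSymm_adjMatrix.smul _)

theorem coeffMatrices_ne_zero_iff {x : Option (ι × Fin k) → ℝ} (hx : x none ≠ 0) {s : Fin k}
    {i j : ι} (hij : i ≠ j) : coeffMatrices G x s i j ≠ 0 ↔ (G s).Adj i j := by
  simp [coeffMatrices, hij, hx]

theorem matrixPoly_coeffMatrices_of_none_eq_zero {x : Option (ι × Fin k) → ℝ} (hx : x none = 0) :
    matrixPoly α (coeffMatrices G x) =
      Matrix.diagonal fun i => C (α i) * X ^ k + ofCoeffs fun s => x (some (i, s)) := by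
  ext1 i j
  by_cases hij : i = j
  · subst hij; simp [matrixPoly_apply_self, coeffMatrices, hx]
  · simp [matrixPoly_apply_of_ne _ _ hij, coeffMatrices, hx, hij, ofCoeffs]

theorem matrixPoly_coeffMatrices_basePoint_add_smul {u : Option (ι × Fin k) → ℝ}
    (hu : u none = 0) (t : ℝ) :
    matrixPoly α (coeffMatrices G (basePoint α μ + t • u)) =
      Matrix.diagonal fun i => diagPoly α μ i + C t * ofCoeffs fun s => u (some (i, s)) := by
  rw [matrixPoly_coeffMatrices_of_none_eq_zero G α (by simp [basePoint, hu])]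
  congr 1
  funext i
  rw [diagPoly_eq α μ i, add_assoc, ← ofCoeffs_add_smul]
  rfl

variable [Fintype ι]

/-- The coupling `t = x none` is kept as a coordinate so that the inverse function theorem can
prescribe it. -/
noncomputable def detEvalMap (x : Option (ι × Fin k) → ℝ) : Option (ι × Fin k) → ℝ
  | none => x none
  | some v => (matrixPoly α (coeffMatrices G x)).det.eval (μ v)

theorem detEvalMap_basePoint_add_smul {u : Option (ι × Fin k) → ℝ} (hu : u none = 0) (t : ℝ)
    (v : ι × Fin k) :
    detEvalMap G α μ (basePoint α μ + t • u) (some v) =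
      ∏ i, ((diagPoly α μ i).eval (μ v) + t * (ofCoeffs fun s => u (some (i, s))).eval (μ v)) := by
  simp [detEvalMap, matrixPoly_coeffMatrices_basePoint_add_smul G α μ hu, eval_prod]

theorem detEvalMap_basePoint : detEvalMap G α μ (basePoint α μ) = 0 := by
  funext w
  rcases w with _ | ⟨i, m⟩
  · rfl
  · have h := detEvalMap_basePoint_add_smul G α μ (u := 0) rfl 0 (i, m)
    rw [zero_smul, add_zero] at h
    rw [h]
    exact prod_eq_zero (mem_univ i) (by simp [eval_diagPoly_self])

theorem contDiff_detEvalMap : ContDiff ℝ 1 (detEvalMap G α μ) := by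
  refine contDiff_pi.2 fun w => ?_
  rcases w with _ | v
  · exact contDiff_apply ℝ ℝ none
  · simp only [detEvalMap, ← coe_evalRingHom, RingHom.map_det]
    refine contDiff_det fun i j => ?_
    by_cases hij : i = j
    · subst hij
      simp only [RingHom.mapMatrix_apply, coe_evalRingHom, Matrix.map_apply, matrixPoly_apply_self,
        ofCoeffs, coeffMatrices, Matrix.add_apply, Matrix.diagonal_apply_eq, Matrix.smul_apply,
        SimpleGraph.adjMatrix_apply, SimpleGraph.irrefl, if_false, smul_eq_mul, mul_zero, add_zero,
        eval_add, eval_mul, eval_C, eval_pow, eval_X, eval_finsetSum]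
      fun_prop
    · simp only [RingHom.mapMatrix_apply, coe_evalRingHom, Matrix.map_apply,
        matrixPoly_apply_of_ne _ _ hij, ofCoeffs, coeffMatrices, Matrix.add_apply,
        Matrix.diagonal_apply_ne _ hij, Matrix.smul_apply, smul_eq_mul, zero_add,
        eval_mul, eval_C, eval_pow, eval_X, eval_finsetSum]
      fun_prop

variable {α μ}

theorem fderiv_detEvalMap_injective (hα : ∀ i, α i ≠ 0) (hμ : Function.Injective μ) :
    Function.Injective (fderiv ℝ (detEvalMap G α μ) (basePoint α μ)) := by
  refine (injective_iff_map_eq_zero _).2 fun u hu => ?_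
  have hF := ((contDiff_detEvalMap G α μ).differentiable one_ne_zero (basePoint α μ)).hasFDerivAt
  have hline := hasDerivAt_pi.1 (hF.hasLineDerivAt u)
  simp only [hu, Pi.zero_apply] at hline
  have hnone : u none = 0 := by
    have h : HasDerivAt (fun t : ℝ => detEvalMap G α μ (basePoint α μ + t • u) none)
        (u none) 0 := by
      simpa [detEvalMap, basePoint] using hasDerivAt_mul_const (u none)
    exact h.unique (hline none)
  -- Along directions with `u none = 0` the matrix stays diagonal.
  have hroot (i : ι) (m : Fin k) : (ofCoeffs fun s => u (some (i, s))).eval (μ (i, m)) = 0 := by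
    have h := hasDerivAt_prod_add_mul (fun j => (diagPoly α μ j).eval (μ (i, m)))
      (fun j => (ofCoeffs fun s => u (some (j, s))).eval (μ (i, m))) (eval_diagPoly_self α μ i m)
    rw [← funext fun t => detEvalMap_basePoint_add_smul G α μ hnone t (i, m)] at h
    refine (mul_eq_zero.1 (h.unique (hline (some (i, m))))).resolve_left ?_
    exact prod_ne_zero_iff.2 fun j hj => eval_diagPoly_ne_zero α μ hμ hα (ne_of_mem_erase hj) m
  have hdiag (i : ι) (s : Fin k) : u (some (i, s)) = 0 := by
    have h := eq_zero_of_natDegree_lt_card_of_eval_eq_zero _ (hμ.comp (Prod.mk_right_injective i))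
      (hroot i) (by simpa using natDegree_ofCoeffs_lt s.pos _)
    simpa [coeff_ofCoeffs] using congrArg (coeff · s) h
  funext w
  rcases w with _ | ⟨i, s⟩
  exacts [hnone, hdiag i s]

theorem exists_coupling_ne_zero_detEvalMap_eq_zero (hα : ∀ i, α i ≠ 0)
    (hμ : Function.Injective μ) :
    ∃ x, x none ≠ 0 ∧ ∀ v, detEvalMap G α μ x (some v) = 0 := by
  set F := detEvalMap G α μ
  have hstrict : HasStrictFDerivAt F (fderiv ℝ F (basePoint α μ)) (basePoint α μ) :=
    (contDiff_detEvalMap G α μ).contDiffAt.hasStrictFDerivAt one_ne_zero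
  have hsurj : (fderiv ℝ F (basePoint α μ)).range = ⊤ :=
    LinearMap.range_eq_top.2 (LinearMap.injective_iff_surjective.1
      (fderiv_detEvalMap_injective G hα hμ))
  have hrange : Set.range F ∈ 𝓝 0 := by
    rw [← detEvalMap_basePoint G α μ, ← hstrict.map_nhds_eq_of_surj hsurj]
    exact Filter.range_mem_map
  have htend : Filter.Tendsto (fun t : ℝ => (Pi.single none t : Option (ι × Fin k) → ℝ))
      (𝓝[≠] 0) (𝓝 0) :=
    ((continuous_single none).tendsto' 0 0 (Pi.single_zero none)).mono_left nhdsWithin_le_nhds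
  obtain ⟨t, ⟨x, hx⟩, ht⟩ := ((htend.eventually hrange).and self_mem_nhdsWithin).exists
  refine ⟨x, ?_, fun v => ?_⟩
  · have h : F x none = t := by simpa using congrFun hx none
    exact fun h0 => ht (h.symm.trans h0)
  · simpa using congrFun hx (some v)

end Perturbation

end MatrixPolynomial

open MatrixPolynomial

/-- Main existence theorem: given `nk` distinct real numbers, positive numbers
`α r`, and graphs `G s`, there are real symmetric matrices `A s` whose graphs
are the `G s`, such that the matrix polynomial with leading coefficient
`diag(α)` and lower coefficients `A s` has exactly the given numbers as the
zeros of its determinant. -/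
theorem stmt_10 (n k : ℕ) (hk : 0 < k)
    (lam : Fin (n * k) → ℝ) (hlam : Function.Injective lam)
    (α : Fin n → ℝ) (hα : ∀ r, 0 < α r)
    (G : Fin k → SimpleGraph (Fin n)) :
    ∃ A : Fin k → Matrix (Fin n) (Fin n) ℝ,
      (∀ s, (A s).IsSymm) ∧
      (∀ s, ∀ i j : Fin n, i ≠ j → ((A s i j ≠ 0) ↔ (G s).Adj i j)) ∧
      (∀ z : ℝ,
        (Matrix.det (Matrix.of fun i j : Fin n =>
          (if i = j then Polynomial.C (α i) * Polynomial.X ^ k else 0) +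
            ∑ s : Fin k, Polynomial.C (A s i j) * Polynomial.X ^ (s : ℕ))).eval z
          = 0 ↔ ∃ q, lam q = z) := by
  classical
  have hμ : Function.Injective (lam ∘ finProdFinEquiv) := hlam.comp finProdFinEquiv.injective
  have hα' : ∀ i, α i ≠ 0 := fun i => (hα i).ne'
  obtain ⟨x, hx, hroot⟩ := exists_coupling_ne_zero_detEvalMap_eq_zero G hα' hμ
  refine ⟨coeffMatrices G x, isSymm_coeffMatrices G x,
    fun s i j hij => coeffMatrices_ne_zero_iff G hx hij, fun z => ?_⟩
  exact (eval_det_matrixPoly_eq_zero_iff α _ hk hα' hμ (by simp) hroot z).trans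
    (finProdFinEquiv.surjective.exists (p := fun q => lam q = z)).symm
end

section
/- Given simple graphs G and H on n vertices, a positive definite diagonal n×n real matrix M, and 2n distinct real numbers λ_1, ..., λ_{2n}, there exist real symmetric n×n matrices D and K whose graphs are H and G respectively, such that the quadratic matrix polynomial L(z) = M z^2 + D z + K satisfies: the set of zeros of det L(z) is exactly {λ_1, ..., λ_{2n}}. -/
/-!
For `t = 0` there is a diagonal solution: split the `λ`s into pairs `{a i, b i}` and take `D`, `K`
diagonal with `m i z² + D i i z + K i i = m i (z - a i) (z - b i)`. Now let
`D = diag d + t A_H`, `K = diag k + t A_G` (adjacency matrices) and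
`Φ (t, d, k) = (t, (det L(λ_q))_q)`. At the diagonal solution each `λ_q` is a simple root of
exactly one diagonal entry, so the Jacobian of `Φ` is invertible, and by the inverse function
theorem `Φ` attains `(t, 0)` for some small `t ≠ 0`. Finally `det L` has degree `2n` and leading
coefficient `∏ m i ≠ 0`, so it has no roots besides the `2n` distinct `λ_q`.
-/

open Matrix Polynomial Finset Filter Topology

section DetQuadratic

variable {ι R : Type*} [Fintype ι] [DecidableEq ι] [CommRing R]

theorem Polynomial.natDegree_det_le_of_natDegree_le (P : Matrix ι ι R[X]) {k : ℕ}
    (hP : ∀ i j, (P i j).natDegree ≤ k) : P.det.natDegree ≤ Fintype.card ι * k := by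
  rw [det_apply]
  refine natDegree_sum_le_of_forall_le _ _ fun σ _ => ?_
  rw [Units.smul_def]
  refine (natDegree_smul_le _ _).trans <| (natDegree_prod_le _ _).trans ?_
  simpa using sum_le_card_nsmul univ _ k fun i _ => hP (σ i) i

theorem Polynomial.coeff_det_of_natDegree_le (P : Matrix ι ι R[X]) {k : ℕ}
    (hP : ∀ i j, (P i j).natDegree ≤ k) :
    P.det.coeff (Fintype.card ι * k) = (P.map (coeff · k)).det := by
  rw [det_apply, det_apply, finsetSum_coeff]
  refine sum_congr rfl fun σ _ => ?_
  rw [Units.smul_def, Units.smul_def, zsmul_eq_mul, zsmul_eq_mul, ← C_eq_intCast, coeff_C_mul,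
    ← card_univ, coeff_prod_of_natDegree_le _ _ _ fun i _ => hP _ _]
  rfl

namespace Matrix

theorem eval_det_quadratic (M D K : Matrix ι ι R) (z : R) :
    ((X : R[X]) ^ 2 • M.map C + (X : R[X]) • D.map C + K.map C).det.eval z
      = (z ^ 2 • M + z • D + K).det := by
  rw [← coe_evalRingHom, RingHom.map_det]
  congr 1
  ext i j
  simp only [coe_evalRingHom, RingHom.mapMatrix_apply, map_apply, add_apply, smul_apply,
    smul_eq_mul, eval_add, eval_mul, eval_pow, eval_X, eval_C]

theorem det_quadratic_eq_zero_iff [IsDomain R] {κ : Type*} [Fintype κ] {M : Matrix ι ι R}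
    (hM : M.det ≠ 0) (D K : Matrix ι ι R) {r : κ → R} (hr : Function.Injective r)
    (hcard : Fintype.card κ = 2 * Fintype.card ι)
    (hroot : ∀ q, (r q ^ 2 • M + r q • D + K).det = 0) (z : R) :
    (z ^ 2 • M + z • D + K).det = 0 ↔ ∃ q, r q = z := by
  set P : Matrix ι ι R[X] := (X : R[X]) ^ 2 • M.map C + (X : R[X]) • D.map C + K.map C
  have hdeg : ∀ i j, (P i j).natDegree ≤ 2 := fun i j => by
    simp only [P, add_apply, smul_apply, map_apply, smul_eq_mul]
    compute_degree
  have hP : P.det ≠ 0 := by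
    have hlead : P.det.coeff (Fintype.card ι * 2) = M.det := by
      rw [coeff_det_of_natDegree_le P hdeg]
      congr 1
      ext i j
      simp [P]
    exact fun h => hM (by rw [← hlead, h, coeff_zero])
  refine ⟨fun hz => ?_, fun ⟨q, hq⟩ => hq ▸ hroot q⟩
  classical
  by_contra hzr
  refine hP (eq_zero_of_natDegree_lt_card_of_eval_eq_zero' _ (insert z (univ.image r)) ?_ ?_)
  · intro w hw
    obtain rfl | ⟨q, -, rfl⟩ := by simpa only [mem_insert, mem_image] using hw
    · rwa [eval_det_quadratic]
    · rw [eval_det_quadratic, hroot]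
  · rw [card_insert_of_notMem (by simpa using fun q => (hzr ⟨q, ·⟩)), card_image_of_injective _ hr,
      card_univ, hcard]
    have := natDegree_det_le_of_natDegree_le P hdeg
    omega

end Matrix

end DetQuadratic

section DetDerivative

variable {ι : Type*} [Fintype ι] [DecidableEq ι]

noncomputable def Matrix.detRowContinuous (ι : Type*) [Fintype ι] [DecidableEq ι] :
    ContinuousMultilinearMap ℝ (fun _ : ι => ι → ℝ) ℝ :=
  { (detRowAlternating : (ι → ℝ) [⋀^ι]→ₗ[ℝ] ℝ).toMultilinearMap with
    cont := continuous_id.matrix_det }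

namespace Matrix

theorem detRowContinuous_apply (v : ι → ι → ℝ) : detRowContinuous ι v = (of v).det := rfl

theorem detRowContinuous_linearDeriv_diagonal {w : ι → ℝ} {i₀ : ι} (hw : w i₀ = 0)
    (u : ι → ℝ) :
    (detRowContinuous ι).linearDeriv (of.symm (diagonal w)) (of.symm (diagonal u))
      = u i₀ * ∏ j ∈ univ \ {i₀}, w j := by
  have hterm (i : ι) :
      detRowContinuous ι (Function.update (of.symm (diagonal w)) i (of.symm (diagonal u) i))
        = u i * ∏ j ∈ univ \ {i}, w j := by
    change ((diagonal w).updateRow i ((diagonal u).row i)).det = _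
    rw [row_diagonal, diagonal_updateRow_single, det_diagonal, prod_update_of_mem (mem_univ i)]
  rw [ContinuousMultilinearMap.linearDeriv_apply, sum_congr rfl fun i _ => hterm i]
  refine sum_eq_single i₀ (fun i _ hi => ?_) (by simp)
  rw [prod_eq_zero (i := i₀) (by simpa using Ne.symm hi) hw, mul_zero]

end Matrix

end DetDerivative

namespace QuadraticPencil

variable {ι : Type*}

theorem root_factor_eq_zero (r : Fin 2 × ι → ℝ) (p : Fin 2 × ι) : (r p - r (0, p.2)) * (r p - r (1, p.2)) = 0 := by
  obtain ⟨a, i⟩ := p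
  fin_cases a <;> simp

theorem root_factor_ne_zero {r : Fin 2 × ι → ℝ} (hr : Function.Injective r) {p : Fin 2 × ι}
    {j : ι} (hj : j ≠ p.2) : (r p - r (0, j)) * (r p - r (1, j)) ≠ 0 := by
  refine mul_ne_zero (sub_ne_zero.2 fun h => hj ?_) (sub_ne_zero.2 fun h => hj ?_) <;>
    simp [hr h]

variable [DecidableEq ι] (m : ι → ℝ) (A B : Matrix ι ι ℝ)

def pencil (z : ℝ) (x : ℝ × (ι → ℝ) × (ι → ℝ)) : Matrix ι ι ℝ :=
  z ^ 2 • diagonal m + z • (diagonal x.2.1 + x.1 • A) + (diagonal x.2.2 + x.1 • B)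

def basePoint (r : Fin 2 × ι → ℝ) : ℝ × (ι → ℝ) × (ι → ℝ) :=
  (0, fun i => -m i * (r (0, i) + r (1, i)), fun i => m i * (r (0, i) * r (1, i)))

theorem pencil_basePoint (r : Fin 2 × ι → ℝ) (z : ℝ) :
    pencil m A B z (basePoint m r)
      = diagonal fun i => m i * ((z - r (0, i)) * (z - r (1, i))) := by
  ext i j
  by_cases hij : i = j
  · subst hij
    simp only [pencil, basePoint, zero_smul, add_zero, Matrix.add_apply, Matrix.smul_apply,
      diagonal_apply_eq, smul_eq_mul]
    ring
  · simp [pencil, basePoint, hij]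

variable [Fintype ι]

noncomputable def linearPart (z : ℝ) : ℝ × (ι → ℝ) × (ι → ℝ) →L[ℝ] (ι → ι → ℝ) :=
  LinearMap.toContinuousLinearMap <| (ofLinearEquiv ℝ).symm.toLinearMap ∘ₗ
    { toFun x := z • (diagonal x.2.1 + x.1 • A) + (diagonal x.2.2 + x.1 • B)
      map_add' x y := by
        ext i j
        simp only [Matrix.add_apply, Matrix.smul_apply, diagonal_apply, Prod.fst_add,
          Prod.snd_add, Pi.add_apply, smul_eq_mul]
        split_ifs <;> ring
      map_smul' c x := by
        ext i j
        simp only [Matrix.add_apply, Matrix.smul_apply, diagonal_apply, Prod.smul_fst,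
          Prod.smul_snd, Pi.smul_apply, smul_eq_mul, RingHom.id_apply]
        split_ifs <;> ring }

theorem linearPart_apply (z : ℝ) (x : ℝ × (ι → ℝ) × (ι → ℝ)) :
    linearPart A B z x = of.symm (z • (diagonal x.2.1 + x.1 • A) + (diagonal x.2.2 + x.1 • B)) :=
  rfl

theorem of_symm_pencil (z : ℝ) (x : ℝ × (ι → ℝ) × (ι → ℝ)) :
    of.symm (pencil m A B z x) = of.symm (z ^ 2 • diagonal m) + linearPart A B z x := by
  rw [pencil, add_assoc]
  rfl

theorem linearPart_zero_fst (z : ℝ) (d k : ι → ℝ) :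
    linearPart A B z (0, d, k) = of.symm (diagonal (z • d + k)) := by
  simp only [linearPart_apply, zero_smul, add_zero, ← diagonal_smul, diagonal_add]
  rfl

section DetMap

variable {κ : Type*} [Fintype κ] (r : κ → ℝ)

noncomputable def detMap : ℝ × (ι → ℝ) × (ι → ℝ) → ℝ × (κ → ℝ) :=
  fun x => (x.1, fun p => (pencil m A B (r p) x).det)

noncomputable def detMapDeriv (x : ℝ × (ι → ℝ) × (ι → ℝ)) :
    ℝ × (ι → ℝ) × (ι → ℝ) →L[ℝ] ℝ × (κ → ℝ) :=
  (ContinuousLinearMap.fst ℝ ℝ _).prod <| ContinuousLinearMap.pi fun p =>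
    ((detRowContinuous ι).linearDeriv (of.symm (pencil m A B (r p) x))).comp
      (linearPart A B (r p))

theorem hasStrictFDerivAt_detMap (x : ℝ × (ι → ℝ) × (ι → ℝ)) :
    HasStrictFDerivAt (detMap m A B r) (detMapDeriv m A B r x) x := by
  refine hasStrictFDerivAt_fst.prodMk (hasStrictFDerivAt_pi.2 fun p => ?_)
  change HasStrictFDerivAt (fun y => (pencil m A B (r p) y).det) _ x
  have hdet : (fun y => (pencil m A B (r p) y).det)
      = fun y => detRowContinuous ι (of.symm (r p ^ 2 • diagonal m) + linearPart A B (r p) y) :=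
    funext fun y => by rw [← of_symm_pencil]; rfl
  rw [hdet, of_symm_pencil]
  exact ((detRowContinuous ι).hasStrictFDerivAt _).comp x
    ((linearPart A B (r p)).hasStrictFDerivAt.const_add _)

end DetMap

variable (r : Fin 2 × ι → ℝ)

theorem detMap_basePoint : detMap m A B r (basePoint m r) = 0 := by
  refine Prod.ext rfl (funext fun p => ?_)
  change (pencil m A B (r p) (basePoint m r)).det = 0
  rw [pencil_basePoint, det_diagonal]
  exact prod_eq_zero (mem_univ p.2) (by rw [root_factor_eq_zero, mul_zero])

theorem detMapDeriv_basePoint_apply (d k : ι → ℝ) (p : Fin 2 × ι) :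
    (detMapDeriv m A B r (basePoint m r) (0, d, k)).2 p
      = (r p * d p.2 + k p.2) *
          ∏ j ∈ univ \ {p.2}, m j * ((r p - r (0, j)) * (r p - r (1, j))) := by
  change ((detRowContinuous ι).linearDeriv _) (linearPart A B (r p) (0, d, k)) = _
  rw [pencil_basePoint, linearPart_zero_fst, detRowContinuous_linearDeriv_diagonal]
  · rfl
  · rw [root_factor_eq_zero, mul_zero]

variable {m r}

theorem detMapDeriv_basePoint_injective (hm : ∀ i, m i ≠ 0) (hr : Function.Injective r) :
    Function.Injective (detMapDeriv m A B r (basePoint m r)) := by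
  rw [injective_iff_map_eq_zero]
  rintro ⟨t, d, k⟩ h
  obtain rfl : t = 0 := congrArg Prod.fst h
  have hlin (p : Fin 2 × ι) : r p * d p.2 + k p.2 = 0 := by
    have hp := congrFun (congrArg Prod.snd h) p
    rw [detMapDeriv_basePoint_apply] at hp
    refine (mul_eq_zero.1 hp).resolve_right (prod_ne_zero_iff.2 fun j hj => ?_)
    exact mul_ne_zero (hm j) (root_factor_ne_zero hr (by simpa using hj))
  obtain rfl : d = 0 := funext fun i => by
    have hne : r (0, i) - r (1, i) ≠ 0 := sub_ne_zero.2 (hr.ne (by simp))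
    refine (mul_eq_zero.1 ?_).resolve_left hne
    linear_combination hlin (0, i) - hlin (1, i)
  obtain rfl : k = 0 := funext fun i => by simpa using hlin (0, i)
  rfl

theorem exists_pencil_det_eq_zero (hm : ∀ i, m i ≠ 0) (hr : Function.Injective r) :
    ∃ x : ℝ × (ι → ℝ) × (ι → ℝ), x.1 ≠ 0 ∧ ∀ p, (pencil m A B (r p) x).det = 0 := by
  have hdim : Module.finrank ℝ (ℝ × (ι → ℝ) × (ι → ℝ))
      = Module.finrank ℝ (ℝ × (Fin 2 × ι → ℝ)) := by
    simp only [Module.finrank_prod, Module.finrank_fintype_fun_eq_card, Fintype.card_prod,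
      Fintype.card_fin, Module.finrank_self]
    ring
  let e := ((detMapDeriv m A B r (basePoint m r)).toLinearMap.linearEquivOfInjective
    (detMapDeriv_basePoint_injective A B hm hr) hdim).toContinuousLinearEquiv
  have hf : HasStrictFDerivAt (detMap m A B r) (e : _ →L[ℝ] _) (basePoint m r) :=
    hasStrictFDerivAt_detMap m A B r _
  have hrange : Set.range (detMap m A B r) ∈ 𝓝 0 := by
    rw [← detMap_basePoint m A B r, ← hf.map_nhds_eq_of_equiv]
    exact range_mem_map
  have hline : ∀ᶠ t in 𝓝[≠] (0 : ℝ), (t, 0) ∈ Set.range (detMap m A B r) :=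
    nhdsWithin_le_nhds ((continuous_id.prodMk continuous_const).tendsto' 0 0 rfl hrange)
  obtain ⟨t, ⟨x, hx⟩, ht⟩ := (hline.and self_mem_nhdsWithin).exists
  exact ⟨x, (congrArg Prod.fst hx).trans_ne ht, fun p => congrFun (congrArg Prod.snd hx) p⟩

end QuadraticPencil

theorem SimpleGraph.diagonal_add_smul_adjMatrix_ne_zero_iff {V α : Type*} [DecidableEq V]
    [Semiring α] (G : SimpleGraph V) [DecidableRel G.Adj] (d : V → α) {t : α} (ht : t ≠ 0)
    {i j : V} (hij : i ≠ j) : (diagonal d + t • G.adjMatrix α) i j ≠ 0 ↔ G.Adj i j := by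
  by_cases h : G.Adj i j <;> simp [diagonal_apply_ne _ hij, h, ht]

/-- Structured inverse quadratic proper value problem (k = 2 case): given
graphs `G`, `H`, a positive definite diagonal mass matrix and `2n` distinct
real numbers, there exist symmetric `D`, `K` with graphs `H`, `G` such that
`det (M z² + D z + K)` vanishes exactly at the given numbers. -/
theorem stmt_11 (n : ℕ) (G H : SimpleGraph (Fin n))
    (m : Fin n → ℝ) (hm : ∀ i, 0 < m i)
    (lam : Fin (2 * n) → ℝ) (hlam : Function.Injective lam) :
    ∃ D K : Matrix (Fin n) (Fin n) ℝ,
      D.IsSymm ∧ K.IsSymm ∧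
      (∀ i j : Fin n, i ≠ j → ((D i j ≠ 0) ↔ H.Adj i j)) ∧
      (∀ i j : Fin n, i ≠ j → ((K i j ≠ 0) ↔ G.Adj i j)) ∧
      (∀ z : ℝ,
        (z ^ 2 • Matrix.diagonal m + z • D + K).det = 0 ↔ ∃ q, lam q = z) := by
  classical
  obtain ⟨⟨t, d, k⟩, ht, hroot⟩ := QuadraticPencil.exists_pencil_det_eq_zero
    (H.adjMatrix ℝ) (G.adjMatrix ℝ) (fun i => (hm i).ne') (hlam.comp finProdFinEquiv.injective)
  have hM : (diagonal m).det ≠ 0 := by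
    rw [det_diagonal]
    exact prod_ne_zero_iff.2 fun i _ => (hm i).ne'
  refine ⟨diagonal d + t • H.adjMatrix ℝ, diagonal k + t • G.adjMatrix ℝ,
    (isSymm_diagonal d).add (H.isSymm_adjMatrix.smul t),
    (isSymm_diagonal k).add (G.isSymm_adjMatrix.smul t),
    fun i j => H.diagonal_add_smul_adjMatrix_ne_zero_iff d ht,
    fun i j => G.diagonal_add_smul_adjMatrix_ne_zero_iff k ht,
    det_quadratic_eq_zero_iff hM _ _ hlam (by simp) fun q => ?_⟩
  simpa only [QuadraticPencil.pencil, Function.comp_apply, Equiv.apply_symm_apply]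
    using hroot (finProdFinEquiv.symm q)
end
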